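/- Let a discrete group G act by homeomorphisms α on a locally compact Hausdorff space X, and suppose the action is topologically G-separating: for all open U₁, U₂ ⊆ X and compact K₁ ⊆ U₁, K₂ ⊆ U₂ there exist g₁, g₂ ∈ G with α_{g₁}(K₁) ⊆ U₁, α_{g₂}(K₂) ⊆ U₂ and α_{g₁}(K₁) ∩ α_{g₂}(K₂) = ∅. Then for every a, b ∈ C₀(X)₊, c ∈ C₀(X) and ε > 0 there exist d₁, d₂ ∈ C₀(X) and g₁, g₂ ∈ G with ‖d₁²·a − σ_{g₁}(a)‖ < ε, ‖d₂²·b − σ_{g₂}(b)‖ < ε and d₁·c·d₂ = 0, where σ_g(f) = f ∘ α_g⁻¹. -/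

import Mathlib

/-!
Put `K_a = {‖a‖ ≥ ε/2} ⊆ U_a = {‖a‖ > ε/4}`, and likewise for `b`. Separation moves `K_a`, `K_b`
by `g₁`, `g₂` into `U_a`, `U_b` with disjoint images; Urysohn functions `h₁`, `h₂` equal to `1` on
these images and with disjoint supports give `d₁ = h₁ · √(σ_{g₁}(a) / max(a, ε/4))` and similarly
`d₂`. On `α_{g₁}(K_a)` we have `a > ε/4`, so `d₁² a = σ_{g₁}(a)` there; off it `σ_{g₁}(a) < ε/2`
and `0 ≤ d₁² a ≤ σ_{g₁}(a)`. Disjointness of the supports gives `d₁ c d₂ = 0`.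
-/

open scoped ComplexOrder ZeroAtInfty
open Set Filter Function

theorem abs_sq_mul_mul_div_max_sub_le {h r s η δ : ℝ} (hh : h ∈ Icc (0 : ℝ) 1) (hr : 0 ≤ r)
    (hs : 0 ≤ s) (hη : 0 < η) (hδ : 0 ≤ δ) (hlarge : δ ≤ s → h = 1 ∧ η < r) :
    |h ^ 2 * s * (r / max r η) - s| ≤ δ := by
  by_cases hsδ : δ ≤ s
  · obtain ⟨rfl, hηr⟩ := hlarge hsδ
    rw [max_eq_left hηr.le, div_self (hη.trans hηr).ne']
    simpa using hδ
  · have hm : 0 < max r η := lt_max_of_lt_right hη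
    have hratio : r / max r η ≤ 1 := (div_le_one hm).mpr (le_max_left r η)
    have hprod : h ^ 2 * (r / max r η) ≤ 1 :=
      mul_le_one₀ (pow_le_one₀ hh.1 hh.2) (by positivity) hratio
    rw [abs_sub_comm, abs_of_nonneg (by nlinarith)]
    nlinarith [show 0 ≤ h ^ 2 * s * (r / max r η) by positivity]

theorem exists_continuous_one_one_disjoint_support {X : Type*} [TopologicalSpace X] [T2Space X]
    [LocallyCompactSpace X] {K₁ K₂ : Set X} (hK₁ : IsCompact K₁) (hK₂ : IsCompact K₂)
    (hK : Disjoint K₁ K₂) :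
    ∃ f₁ f₂ : C(X, ℝ), EqOn f₁ 1 K₁ ∧ EqOn f₂ 1 K₂ ∧
      HasCompactSupport f₁ ∧ HasCompactSupport f₂ ∧
      (∀ x, f₁ x ∈ Icc (0 : ℝ) 1) ∧ (∀ x, f₂ x ∈ Icc (0 : ℝ) 1) ∧
      Disjoint (support f₁) (support f₂) := by
  obtain ⟨V₁, V₂, hV₁, hV₂, hKV₁, hKV₂, hV⟩ := SeparatedNhds.of_isCompact_isCompact hK₁ hK₂ hK
  obtain ⟨f₁, hf₁K, hf₁V, hf₁c, hf₁I⟩ := exists_continuous_one_zero_of_isCompact hK₁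
    hV₁.isClosed_compl (disjoint_compl_right_iff_subset.mpr hKV₁)
  obtain ⟨f₂, hf₂K, hf₂V, hf₂c, hf₂I⟩ := exists_continuous_one_zero_of_isCompact hK₂
    hV₂.isClosed_compl (disjoint_compl_right_iff_subset.mpr hKV₂)
  refine ⟨f₁, f₂, hf₁K, hf₂K, hf₁c, hf₂c, hf₁I, hf₂I, hV.mono ?_ ?_⟩
  · exact fun x hx => not_not.mp fun hxV => hx (hf₁V hxV)
  · exact fun x hx => not_not.mp fun hxV => hx (hf₂V hxV)

namespace ZeroAtInftyContinuousMap

variable {X : Type*} [TopologicalSpace X]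

theorem isCompact_setOf_le_norm {E : Type*} [SeminormedAddCommGroup E] (f : C₀(X, E)) {r : ℝ}
    (hr : 0 < r) : IsCompact {x | r ≤ ‖f x‖} := by
  obtain ⟨t, ht, hsub⟩ := mem_cocompact'.mp <|
    f.zero_at_infty'.norm (Iio_mem_nhds (by simpa using hr) : Iio r ∈ nhds ‖(0 : E)‖)
  exact ht.of_isClosed_subset (isClosed_le continuous_const f.continuous.norm)
    fun x (hx : r ≤ ‖f x‖) => hsub hx.not_gt

theorem mul_mul_eq_zero_of_disjoint_support {R : Type*} [TopologicalSpace R]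
    [NonUnitalNonAssocSemiring R] [IsTopologicalSemiring R] {f g : C₀(X, R)}
    (hfg : Disjoint (support f) (support g)) (c : C₀(X, R)) : f * c * g = 0 := by
  ext x
  by_cases hfx : f x = 0
  · simp [hfx]
  · simp [notMem_support.mp (disjoint_left.mp hfg hfx)]

theorem exists_mul_self_mul_sub_comp_norm_le {a : C₀(X, ℂ)} (ha : ∀ x, 0 ≤ a x) (φ : X ≃ₜ X)
    {δ η : ℝ} (hδ : 0 ≤ δ) (hη : 0 < η) {h : C(X, ℝ)} (hh : ∀ x, h x ∈ Icc (0 : ℝ) 1)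
    (hhc : HasCompactSupport h) (hh₁ : EqOn h 1 (φ '' {x | δ ≤ ‖a x‖}))
    (hφ : φ '' {x | δ ≤ ‖a x‖} ⊆ {x | η < ‖a x‖}) :
    ∃ d : C₀(X, ℂ), support d ⊆ support h ∧
      ‖d * d * a - a.comp φ.symm.toCocompactMap‖ ≤ δ := by
  have hm : ∀ x, 0 < max ‖a x‖ η := fun x => lt_max_of_lt_right hη
  let ratio : C(X, ℝ) := ⟨fun x => √(‖a (φ.symm x)‖ / max ‖a x‖ η),
    Real.continuous_sqrt.comp <| ((a.continuous.comp φ.symm.continuous).norm).div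
      (a.continuous.norm.max continuous_const) fun x => (hm x).ne'⟩
  let q : C(X, ℂ) := (⟨Complex.ofReal, Complex.continuous_ofReal⟩ : C(ℝ, ℂ)).comp (h * ratio)
  have hhr : HasCompactSupport (h * ratio) := by
    rw [ContinuousMap.coe_mul]
    exact hhc.mul_right
  have hq : HasCompactSupport q := hhr.comp_left Complex.ofReal_zero
  refine ⟨⟨q, hq.is_zero_at_infty⟩, ?_, ?_⟩
  · exact (support_comp_subset Complex.ofReal_zero _).trans (support_mul_subset_left _ _)
  rw [← norm_toBCF_eq_norm, BoundedContinuousFunction.norm_le hδ]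
  intro x
  set r := ‖a x‖
  set s := ‖a (φ.symm x)‖
  have hqx : q x * q x = ((h x ^ 2 * (s / max r η) : ℝ) : ℂ) := by
    simp only [q, ratio, ContinuousMap.comp_apply, ContinuousMap.mul_apply, ContinuousMap.coe_mk]
    rw [← Complex.ofReal_mul, mul_mul_mul_comm, ← sq,
      Real.mul_self_sqrt (div_nonneg (norm_nonneg _) (hm x).le)]
  have hvalue : (⟨q, hq.is_zero_at_infty⟩ * ⟨q, hq.is_zero_at_infty⟩ * a
      - a.comp φ.symm.toCocompactMap : C₀(X, ℂ)).toBCF x =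
      ((h x ^ 2 * s * (r / max r η) - s : ℝ) : ℂ) := by
    change q x * q x * a x - a (φ.symm x) = _
    rw [hqx, Complex.eq_coe_norm_of_nonneg (ha x), Complex.eq_coe_norm_of_nonneg (ha (φ.symm x))]
    push_cast
    ring
  rw [hvalue, Complex.norm_real, Real.norm_eq_abs]
  refine abs_sq_mul_mul_div_max_sub_le (hh x) (norm_nonneg _) (norm_nonneg _) hη hδ fun hs => ?_
  have hx : x ∈ φ '' {x | δ ≤ ‖a x‖} := ⟨φ.symm x, hs, φ.apply_symm_apply x⟩
  exact ⟨hh₁ hx, hφ hx⟩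

end ZeroAtInftyContinuousMap

open ZeroAtInftyContinuousMap

theorem stmt5_general {X G : Type*} [TopologicalSpace X] [LocallyCompactSpace X] [T2Space X]
    (α : G → X ≃ₜ X)
    (hsep : ∀ U₁ U₂ : Set X, IsOpen U₁ → IsOpen U₂ →
      ∀ K₁ K₂ : Set X, IsCompact K₁ → IsCompact K₂ → K₁ ⊆ U₁ → K₂ ⊆ U₂ →
        ∃ g₁ g₂ : G, ⇑(α g₁) '' K₁ ⊆ U₁ ∧ ⇑(α g₂) '' K₂ ⊆ U₂ ∧
          (⇑(α g₁) '' K₁) ∩ (⇑(α g₂) '' K₂) = ∅) :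
    ∀ a b c : ZeroAtInftyContinuousMap X ℂ, (∀ x, 0 ≤ a x) → (∀ x, 0 ≤ b x) →
      ∀ ε : ℝ, 0 < ε →
        ∃ (d₁ d₂ : ZeroAtInftyContinuousMap X ℂ) (g₁ g₂ : G),
          ‖d₁ * d₁ * a - a.comp (α g₁).symm.toCocompactMap‖ < ε ∧
          ‖d₂ * d₂ * b - b.comp (α g₂).symm.toCocompactMap‖ < ε ∧
          d₁ * c * d₂ = 0 := by
  intro a b c ha hb ε hε
  have hK : ∀ f : C₀(X, ℂ), IsCompact {x | ε / 2 ≤ ‖f x‖} :=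
    fun f => f.isCompact_setOf_le_norm (by positivity)
  have hU : ∀ f : C₀(X, ℂ), IsOpen {x | ε / 4 < ‖f x‖} :=
    fun f => isOpen_lt continuous_const f.continuous.norm
  have hKU : ∀ f : C₀(X, ℂ), {x | ε / 2 ≤ ‖f x‖} ⊆ {x | ε / 4 < ‖f x‖} :=
    fun f x (hx : ε / 2 ≤ ‖f x‖) => (by linarith : ε / 4 < ε / 2).trans_le hx
  obtain ⟨g₁, g₂, hg₁, hg₂, hdisj⟩ :=
    hsep _ _ (hU a) (hU b) _ _ (hK a) (hK b) (hKU a) (hKU b)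
  obtain ⟨h₁, h₂, hh₁K, hh₂K, hh₁c, hh₂c, hh₁I, hh₂I, hsupp⟩ :=
    exists_continuous_one_one_disjoint_support ((hK a).image (α g₁).continuous)
      ((hK b).image (α g₂).continuous) (disjoint_iff_inter_eq_empty.mpr hdisj)
  obtain ⟨d₁, hd₁, hd₁a⟩ := exists_mul_self_mul_sub_comp_norm_le ha (α g₁) (by positivity)
    (by positivity) hh₁I hh₁c hh₁K hg₁
  obtain ⟨d₂, hd₂, hd₂b⟩ := exists_mul_self_mul_sub_comp_norm_le hb (α g₂) (by positivity)
    (by positivity) hh₂I hh₂c hh₂K hg₂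
  exact ⟨d₁, d₂, g₁, g₂, hd₁a.trans_lt (by linarith), hd₂b.trans_lt (by linarith),
    mul_mul_eq_zero_of_disjoint_support (hsupp.mono hd₁ hd₂) c⟩

/-- If the action `α` of `G` on `X` is topologically `G`-separating, then for all
`a, b ∈ C₀(X)₊`, `c ∈ C₀(X)` and `ε > 0` there exist `d₁ d₂ ∈ C₀(X)` and `g₁ g₂ ∈ G` with
`‖d₁² a - σ_{g₁}(a)‖ < ε`, `‖d₂² b - σ_{g₂}(b)‖ < ε` and `d₁ c d₂ = 0`. -/
theorem stmt5 {X G : Type*} [TopologicalSpace X] [LocallyCompactSpace X] [T2Space X] [Group G]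
    (α : G → X ≃ₜ X) (hα : ∀ g h x, α (g * h) x = α g (α h x))
    (hsep : ∀ U₁ U₂ : Set X, IsOpen U₁ → IsOpen U₂ →
      ∀ K₁ K₂ : Set X, IsCompact K₁ → IsCompact K₂ → K₁ ⊆ U₁ → K₂ ⊆ U₂ →
        ∃ g₁ g₂ : G, ⇑(α g₁) '' K₁ ⊆ U₁ ∧ ⇑(α g₂) '' K₂ ⊆ U₂ ∧
          (⇑(α g₁) '' K₁) ∩ (⇑(α g₂) '' K₂) = ∅) :
    ∀ a b c : ZeroAtInftyContinuousMap X ℂ, (∀ x, 0 ≤ a x) → (∀ x, 0 ≤ b x) →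
      ∀ ε : ℝ, 0 < ε →
        ∃ (d₁ d₂ : ZeroAtInftyContinuousMap X ℂ) (g₁ g₂ : G),
          ‖d₁ * d₁ * a - a.comp (α g₁).symm.toCocompactMap‖ < ε ∧
          ‖d₂ * d₂ * b - b.comp (α g₂).symm.toCocompactMap‖ < ε ∧
          d₁ * c * d₂ = 0 :=
  stmt5_general α hsep
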